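/- Let P = S·n·d·R·e·e·T be a Schröder path of length n such that the endpoint of S is the lattice point (i,j) with j > i, and the endpoint of S·n·d·R is the lattice point (j,k). Then S·d·n·R·e·e·T is also a Schröder path of length n, and LLT(S·n·d·R·e·e·T) = q·LLT(S·d·n·R·e·e·T). -/
import Mathlib



/-- An LLT graph: a directed graph with three kinds of edges. -/
structure LLTGraph (V : Type) where
  E1 : Finset (V × V)
  E2 : Finset (V × V)
  Ed : Finset (V × V)

/-- The variable `q`, viewed inside `ℤ[q][x₁,…,x_N]`. -/
noncomputable def lltQ (N : ℕ) : MvPolynomial (Fin N) (Polynomial ℤ) :=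
  MvPolynomial.C Polynomial.X

/-- The LLT generating function of an LLT graph, read as a polynomial identity
in `ℤ[q][x₁,…,x_N]`, colorings taking values in `{1,…,N}` (as `Fin N`). -/
noncomputable def LLT {V : Type} [Fintype V] [DecidableEq V] (G : LLTGraph V) (N : ℕ) :
    MvPolynomial (Fin N) (Polynomial ℤ) :=
  ∑ f : V → Fin N,
    ((∏ e ∈ G.E1, if f e.2 < f e.1 then 1 else 0) *
      (∏ e ∈ G.E2, if f e.2 ≤ f e.1 then 1 else 0) *
      (∏ e ∈ G.Ed,
        ((if f e.2 < f e.1 then lltQ N else 0) + (if f e.1 ≤ f e.2 then 1 else 0)))) *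
    ∏ v : V, MvPolynomial.X (f v)

/-- `K_n^⇒` : the complete LLT graph on `{1,…,n}` whose only edges are
double edges `i ⇒ j` for `i < j`. -/
def KnGraph (n : ℕ) : LLTGraph (Fin n) where
  E1 := ∅
  E2 := ∅
  Ed := Finset.univ.filter fun p => p.1 < p.2
/-- Steps of a Schröder path: north `(0,1)`, east `(1,0)`, diagonal `(1,1)`. -/
inductive SStep : Type
  | north : SStep
  | east  : SStep
  | diag  : SStep
deriving DecidableEq

/-- The displacement vector of a step. -/
def SStep.vec : SStep → ℕ × ℕ
  | .north => (0, 1)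
  | .east  => (1, 0)
  | .diag  => (1, 1)

/-- Endpoint of a path started at the origin `(0,0)`. -/
def endPt (P : List SStep) : ℕ × ℕ :=
  P.foldl (fun p s => (p.1 + s.vec.1, p.2 + s.vec.2)) (0, 0)

/-- The lattice point reached after the first `k` steps. -/
def posAt (P : List SStep) (k : ℕ) : ℕ × ℕ := endPt (P.take k)

/-- A Schröder path of length `n`: from `(0,0)` to `(n,n)`, never strictly below
the main diagonal, with no diagonal step starting on the main diagonal. -/
def IsSchroder (n : ℕ) (P : List SStep) : Prop :=
  endPt P = (n, n) ∧
  (∀ k, (posAt P k).1 ≤ (posAt P k).2) ∧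
  (∀ k, P[k]? = some SStep.diag → (posAt P k).1 < (posAt P k).2)

/-- The box `(i,j)` (unit square with corners `(i-1,j-1)` and `(i,j)`, `i,j ≥ 1`)
contains a diagonal step of `P`. -/
def hasDiagStep (P : List SStep) (i j : ℕ) : Prop :=
  ∃ k, P[k]? = some SStep.diag ∧ posAt P k = (i - 1, j - 1)

/-- The box `(i,j)` lies (weakly) below the path `P`. -/
def boxBelow (P : List SStep) (i j : ℕ) : Prop :=
  ∃ k, (posAt P k).1 ≤ i - 1 ∧ j ≤ (posAt P k).2

open Classical in
/-- The LLT graph `G_P` of a Schröder path `P` of length `n`; vertex `v : Fin n`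
represents the label `v+1`. -/
noncomputable def pathGraph (n : ℕ) (P : List SStep) : LLTGraph (Fin n) where
  E1 := Finset.univ.filter fun p => hasDiagStep P ((p.1 : ℕ) + 1) ((p.2 : ℕ) + 1)
  E2 := ∅
  Ed := Finset.univ.filter fun p =>
    (p.1 : ℕ) < (p.2 : ℕ) ∧ boxBelow P ((p.1 : ℕ) + 1) ((p.2 : ℕ) + 1) ∧
      ¬ hasDiagStep P ((p.1 : ℕ) + 1) ((p.2 : ℕ) + 1)

/-- The height `h(i)` of column `i` of `P`: the `y` such that `(i-1,y)` lies on `P`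
and is followed by an east or diagonal step. -/
noncomputable def colHeight (P : List SStep) (i : ℕ) : ℕ :=
  sSup {y | ∃ k, posAt P k = (i - 1, y) ∧
    (P[k]? = some SStep.east ∨ P[k]? = some SStep.diag)}

/-- The jump `j(i) = h(i+1) - h(i)` of column `i`. -/
noncomputable def jump (P : List SStep) (i : ℕ) : ℕ :=
  colHeight P (i + 1) - colHeight P i

open Classical in
/-- The set of columns `1 ≤ i ≤ n` of `P` containing a diagonal step. -/
noncomputable def diagCols (n : ℕ) (P : List SStep) : Finset ℕ :=
  (Finset.Icc 1 n).filter fun i =>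
    ∃ k, P[k]? = some SStep.diag ∧ (posAt P k).1 = i - 1

/-- `P` is connected: the only points of `P` on the main diagonal are `(0,0)` and `(n,n)`. -/
def ConnectedPath (n : ℕ) (P : List SStep) : Prop :=
  ∀ k, (posAt P k).1 = (posAt P k).2 → posAt P k = (0, 0) ∨ posAt P k = (n, n)

/-- The first two steps of `P` are north and diagonal. -/
def FirstStepsND (P : List SStep) : Prop :=
  P[0]? = some SStep.north ∧ P[1]? = some SStep.diag

/-- `P` has no outer corner: no point of `P` is followed by an east step and then
a north step. -/
def NoOuterCorner (P : List SStep) : Prop :=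
  ¬ ∃ k, P[k]? = some SStep.east ∧ P[k + 1]? = some SStep.north

/-- `P` has no outer corner lying strictly above the main diagonal. -/
def NoOuterCornerAboveDiag (P : List SStep) : Prop :=
  ¬ ∃ k, (posAt P k).1 < (posAt P k).2 ∧
    P[k]? = some SStep.east ∧ P[k + 1]? = some SStep.north

/-- Every connected component of `P` of length `≥ 2` begins with the steps north,
diagonal: from every point on the diagonal the path continues with a north step,
followed either by a diagonal step, or by an east step (a length-one component). -/
def ComponentsStartND (P : List SStep) : Prop :=
  ∀ k < P.length, (posAt P k).1 = (posAt P k).2 →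
    P[k]? = some SStep.north ∧
      (P[k + 1]? = some SStep.diag ∨ P[k + 1]? = some SStep.east)

namespace SchroderAux

lemma foldl_endPt (L : List SStep) (p : ℕ × ℕ) :
    L.foldl (fun p s => (p.1 + s.vec.1, p.2 + s.vec.2)) p
      = (p.1 + (endPt L).1, p.2 + (endPt L).2) := by
  induction L generalizing p with
  | nil => simp [endPt]
  | cons s L ih =>
      simp only [List.foldl_cons, endPt] at *
      rw [ih, ih (((0:ℕ),(0:ℕ)).1 + s.vec.1, ((0:ℕ),(0:ℕ)).2 + s.vec.2)]
      simp; omega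

lemma endPt_append (A B : List SStep) :
    endPt (A ++ B) = ((endPt A).1 + (endPt B).1, (endPt A).2 + (endPt B).2) := by
  unfold endPt
  rw [List.foldl_append]
  exact foldl_endPt B _

lemma posAt_append (A B : List SStep) (l : ℕ) :
    posAt (A ++ B) l
      = ((posAt A l).1 + (posAt B (l - A.length)).1,
         (posAt A l).2 + (posAt B (l - A.length)).2) := by
  unfold posAt
  rw [List.take_append, endPt_append]

lemma posAt_of_length_le {P : List SStep} {l : ℕ} (h : P.length ≤ l) :
    posAt P l = endPt P := by
  unfold posAt
  rw [List.take_of_length_le h]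

lemma posAt_succ (P : List SStep) (l : ℕ) :
    posAt P (l + 1) = ((posAt P l).1 + (P[l]?.elim 0 (·.vec.1)),
      (posAt P l).2 + (P[l]?.elim 0 (·.vec.2))) := by
  unfold posAt
  rw [List.take_succ, endPt_append]
  cases h : P[l]?
  · simp [endPt]
  · simp [endPt]

lemma posAt_fst_mono (P : List SStep) : Monotone (fun l => (posAt P l).1) :=
  monotone_nat_of_le_succ (fun l => by rw [posAt_succ]; exact Nat.le_add_right _ _)

lemma posAt_snd_mono (P : List SStep) : Monotone (fun l => (posAt P l).2) :=
  monotone_nat_of_le_succ (fun l => by rw [posAt_succ]; exact Nat.le_add_right _ _)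

lemma posAt_fst_le (P : List SStep) {k l : ℕ} (h : k ≤ l) :
    (posAt P k).1 ≤ (posAt P l).1 := posAt_fst_mono P h

lemma posAt_snd_le (P : List SStep) {k l : ℕ} (h : k ≤ l) :
    (posAt P k).2 ≤ (posAt P l).2 := posAt_snd_mono P h

lemma posAt_sum_succ_lt (P : List SStep) {l : ℕ} (h : l < P.length) :
    (posAt P l).1 + (posAt P l).2 < (posAt P (l+1)).1 + (posAt P (l+1)).2 := by
  rw [posAt_succ]
  have : P[l]? = some P[l] := List.getElem?_eq_getElem h
  rw [this]
  cases P[l] <;> simp [SStep.vec] <;> omega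

lemma posAt_sum_lt_of_lt (P : List SStep) {l l' : ℕ} (hll : l < l') (hl' : l' ≤ P.length) :
    (posAt P l).1 + (posAt P l).2 < (posAt P l').1 + (posAt P l').2 := by
  induction l' with
  | zero => omega
  | succ l' ih =>
      rcases Nat.lt_succ_iff_lt_or_eq.mp hll with h | h
      · exact lt_trans (ih h (by omega)) (posAt_sum_succ_lt P (by omega))
      · subst h; exact posAt_sum_succ_lt P (by omega)

lemma index_le_length {P : List SStep} {l : ℕ}
    (h : (posAt P l).1 + (posAt P l).2 < (endPt P).1 + (endPt P).2) : l ≤ P.length := by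
  by_contra hc
  rw [posAt_of_length_le (by omega)] at h
  omega

lemma index_unique {P : List SStep} {l l' : ℕ} (hl : l ≤ P.length) (hl' : l' ≤ P.length)
    (h : (posAt P l).1 + (posAt P l).2 = (posAt P l').1 + (posAt P l').2) : l = l' := by
  rcases lt_trichotomy l l' with hc | hc | hc
  · exact absurd h (by have := posAt_sum_lt_of_lt P hc hl'; omega)
  · exact hc
  · exact absurd h (by have := posAt_sum_lt_of_lt P hc hl; omega)



-- extra helpers

lemma posAt_prefix {A : List SStep} (B : List SStep) {l : ℕ} (h : l ≤ A.length) :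
    posAt (A ++ B) l = posAt A l := by
  unfold posAt
  rw [List.take_append_of_le_length h]

lemma posAt_suffix {A : List SStep} (B : List SStep) {l : ℕ} (h : A.length ≤ l) :
    posAt (A ++ B) l
      = ((endPt A).1 + (posAt B (l - A.length)).1,
         (endPt A).2 + (posAt B (l - A.length)).2) := by
  rw [posAt_append, posAt_of_length_le h]


lemma key_id {A : Type} [CommRing A] (q : A) (u s t : ℕ) :
    (if t < u then (1:A) else 0) *
        (((if s < u then q else 0) + (if u ≤ s then 1 else 0)) *
          ((if t < s then q else 0) + (if s ≤ t then 1 else 0))) +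
      (if s < u then (1:A) else 0) *
        (((if t < u then q else 0) + (if u ≤ t then 1 else 0)) *
          ((if s < t then q else 0) + (if t ≤ s then 1 else 0))) =
    q * ((if s < u then (1:A) else 0) *
          ((if t < s then q else 0) + (if s ≤ t then 1 else 0)) +
        (if t < u then (1:A) else 0) *
          ((if s < t then q else 0) + (if t ≤ s then 1 else 0))) := by
  have flip : ∀ x y : ℕ, (if x ≤ y then (1:A) else 0) = (if y < x then 0 else 1) := by
    intro x y
    rcases lt_or_ge y x with h | h
    · rw [if_pos h, if_neg (by omega : ¬ x ≤ y)]
    · rw [if_neg (by omega : ¬ y < x), if_pos (by omega : x ≤ y)]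
  rw [flip u s, flip u t, flip s t, flip t s]
  by_cases h1 : s < u <;> by_cases h2 : t < u <;> by_cases h3 : t < s <;>
    by_cases h4 : s < t <;> simp only [h1, h2, h3, h4, if_true, if_false] <;>
    first | ring1 | omega

lemma llt_key {V : Type} [Fintype V] [DecidableEq V] (N : ℕ)
    (a b c : V) (hab : a ≠ b) (hac : a ≠ c) (hbc : b ≠ c)
    (E1 Ed : Finset (V × V))
    (hab1 : (a,b) ∉ E1) (hac1 : (a,c) ∉ E1)
    (habd : (a,b) ∉ Ed) (hacd : (a,c) ∉ Ed) (hbcd : (b,c) ∉ Ed)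
    (hsym1 : ∀ p ∈ E1, ((Equiv.swap b c) p.1, (Equiv.swap b c) p.2) ∈ E1)
    (hsymd : ∀ p ∈ Ed, ((Equiv.swap b c) p.1, (Equiv.swap b c) p.2) ∈ Ed) :
    LLT ⟨insert (a,c) E1, ∅, insert (a,b) (insert (b,c) Ed)⟩ N
      = lltQ N * LLT ⟨insert (a,b) E1, ∅, insert (b,c) Ed⟩ N := by
  classical
  set R := MvPolynomial (Fin N) (Polynomial ℤ)
  set q : R := lltQ N with hq
  set τ := Equiv.swap b c with hτ
  -- basic non-membership facts for prod_insert
  have hab_ne_bc : ((a,b) : V × V) ≠ (b,c) :=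
    fun h => hab (congrArg Prod.fst h)
  have hab_mem : ((a,b) : V × V) ∉ insert (b,c) Ed := by
    simp only [Finset.mem_insert]; tauto
  -- weight functions
  set W : (V → Fin N) → R := fun f =>
    (∏ e ∈ E1, if f e.2 < f e.1 then 1 else 0) *
      (∏ e ∈ Ed, ((if f e.2 < f e.1 then q else 0) + (if f e.1 ≤ f e.2 then 1 else 0))) *
      ∏ v : V, MvPolynomial.X (f v) with hW
  set A : (V → Fin N) → R := fun f =>
    (if f c < f a then (1:R) else 0) *
      (((if f b < f a then q else 0) + (if f a ≤ f b then 1 else 0)) *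
        ((if f c < f b then q else 0) + (if f b ≤ f c then 1 else 0))) with hA
  set B : (V → Fin N) → R := fun f =>
    (if f b < f a then (1:R) else 0) *
      ((if f c < f b then q else 0) + (if f b ≤ f c then 1 else 0)) with hB
  -- expansion of the two LLT polynomials
  have expandL : LLT ⟨insert (a,c) E1, ∅, insert (a,b) (insert (b,c) Ed)⟩ N
      = ∑ f : V → Fin N, A f * W f := by
    unfold LLT
    apply Finset.sum_congr rfl
    intro f _
    rw [Finset.prod_insert hac1, Finset.prod_insert hab_mem, Finset.prod_insert hbcd,
      Finset.prod_empty]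
    simp only [hA, hW]
    ring
  have expandR : LLT ⟨insert (a,b) E1, ∅, insert (b,c) Ed⟩ N
      = ∑ f : V → Fin N, B f * W f := by
    unfold LLT
    apply Finset.sum_congr rfl
    intro f _
    rw [Finset.prod_insert hab1, Finset.prod_insert hbcd, Finset.prod_empty]
    simp only [hB, hW]
    ring
  rw [expandL, expandR]
  -- the swapping equivalence on colorings
  set σ : (V → Fin N) ≃ (V → Fin N) :=
    { toFun := fun f => f ∘ τ
      invFun := fun f => f ∘ τ
      left_inv := fun f => funext fun x => by simp [hτ, Equiv.swap_apply_self]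
      right_inv := fun f => funext fun x => by simp [hτ, Equiv.swap_apply_self] } with hσ
  have hτa : τ a = a := Equiv.swap_apply_of_ne_of_ne hab hac
  have hτb : τ b = c := Equiv.swap_apply_left b c
  have hτc : τ c = b := Equiv.swap_apply_right b c
  -- invariance of W
  have Winv : ∀ f : V → Fin N, W (σ f) = W f := by
    intro f
    simp only [hW, hσ, Equiv.coe_fn_mk, Function.comp]
    congr 1
    · congr 1
      · refine Finset.prod_nbij' (fun p => (τ p.1, τ p.2)) (fun p => (τ p.1, τ p.2))
          hsym1 hsym1 ?_ ?_ ?_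
        · intro p _; simp [hτ, Equiv.swap_apply_self]
        · intro p _; simp [hτ, Equiv.swap_apply_self]
        · intro p _; rfl
      · refine Finset.prod_nbij' (fun p => (τ p.1, τ p.2)) (fun p => (τ p.1, τ p.2))
          hsymd hsymd ?_ ?_ ?_
        · intro p _; simp [hτ, Equiv.swap_apply_self]
        · intro p _; simp [hτ, Equiv.swap_apply_self]
        · intro p _; rfl
    · exact Equiv.prod_comp τ (fun v => MvPolynomial.X (f v))
  -- the pointwise identity
  have point : ∀ f : V → Fin N, A f + A (σ f) = q * (B f + B (σ f)) := by
    intro f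
    have h1 : σ f a = f a := by simp [hσ, Function.comp, hτa]
    have h2 : σ f b = f c := by simp [hσ, Function.comp, hτb]
    have h3 : σ f c = f b := by simp [hσ, Function.comp, hτc]
    simp only [hA, hB, h1, h2, h3]
    have := key_id q (f a).1 (f b).1 (f c).1
    simpa only [Fin.lt_def, Fin.le_def] using this
  -- sum manipulation
  have splitC : ∀ (C : (V → Fin N) → R),
      (∑ f : V → Fin N, (C f + C (σ f)) * W f) = 2 * ∑ f : V → Fin N, C f * W f := by
    intro C
    have hC : (∑ f : V → Fin N, C (σ f) * W f) = ∑ f : V → Fin N, C f * W f := by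
      calc (∑ f : V → Fin N, C (σ f) * W f)
          = ∑ f : V → Fin N, C (σ f) * W (σ f) :=
            Finset.sum_congr rfl (fun f _ => by rw [Winv])
        _ = ∑ f : V → Fin N, C f * W f := Equiv.sum_comp σ (fun f => C f * W f)
    calc (∑ f : V → Fin N, (C f + C (σ f)) * W f)
        = (∑ f : V → Fin N, C f * W f) + ∑ f : V → Fin N, C (σ f) * W f := by
          rw [← Finset.sum_add_distrib]
          exact Finset.sum_congr rfl fun f _ => by ring
      _ = 2 * ∑ f : V → Fin N, C f * W f := by rw [hC]; ring
  have two_eq : (2 : R) * (∑ f : V → Fin N, A f * W f)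
      = (2 : R) * (q * ∑ f : V → Fin N, B f * W f) := by
    calc (2 : R) * (∑ f : V → Fin N, A f * W f)
        = ∑ f : V → Fin N, (A f + A (σ f)) * W f := (splitC A).symm
      _ = ∑ f : V → Fin N, q * ((B f + B (σ f)) * W f) := by
          exact Finset.sum_congr rfl fun f _ => by rw [point f]; ring
      _ = q * ∑ f : V → Fin N, (B f + B (σ f)) * W f := by rw [← Finset.mul_sum]
      _ = q * (2 * ∑ f : V → Fin N, B f * W f) := by rw [splitC B]
      _ = (2 : R) * (q * ∑ f : V → Fin N, B f * W f) := by ring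
  exact mul_left_cancel₀ two_ne_zero two_eq

end SchroderAux

/-- (Relation (B) on Schröder paths.) If
`P = S·n·d·R·e·e·T` is a Schröder path of length `n`, the endpoint of `S` is
the lattice point `(i,j)` with `j > i`, and the endpoint of `S·n·d·R` is the
lattice point `(j,k)`, then `S·d·n·R·e·e·T` is a Schröder path of length `n`
and `LLT(S·n·d·R·e·e·T) = q·LLT(S·d·n·R·e·e·T)`. -/
theorem llt_schroder_relation_B (n : ℕ) (S R T : List SStep) (i j k : ℕ)
    (hP : IsSchroder n
      (S ++ [SStep.north, SStep.diag] ++ R ++ [SStep.east, SStep.east] ++ T))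
    (hS : endPt S = (i, j)) (hij : i < j)
    (hR : endPt (S ++ [SStep.north, SStep.diag] ++ R) = (j, k)) :
    IsSchroder n
      (S ++ [SStep.diag, SStep.north] ++ R ++ [SStep.east, SStep.east] ++ T) ∧
    ∀ N : ℕ,
      LLT (pathGraph n
        (S ++ [SStep.north, SStep.diag] ++ R ++ [SStep.east, SStep.east] ++ T)) N =
        lltQ N * LLT (pathGraph n
          (S ++ [SStep.diag, SStep.north] ++ R ++ [SStep.east, SStep.east] ++ T)) N := by
  classical
  open SchroderAux in
  set m := S.length with hm
  set m2 := S.length + 2 + R.length with hm2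
  set P : List SStep := S ++ [SStep.north, SStep.diag] ++ R ++ [SStep.east, SStep.east] ++ T
    with hPdef
  set Q : List SStep := S ++ [SStep.diag, SStep.north] ++ R ++ [SStep.east, SStep.east] ++ T
    with hQdef
  obtain ⟨hend, habove, hdiagP⟩ := hP
  -- decompositions of P and Q
  have hP1 : P = (S ++ [SStep.north, SStep.diag]) ++ (R ++ ([SStep.east, SStep.east] ++ T)) := by
    rw [hPdef]; simp [List.append_assoc]
  have hP2 : P = S ++ ([SStep.north, SStep.diag] ++ (R ++ ([SStep.east, SStep.east] ++ T))) := by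
    rw [hPdef]; simp [List.append_assoc]
  have hP3 : P = ((S ++ [SStep.north, SStep.diag]) ++ R) ++ ([SStep.east, SStep.east] ++ T) := by
    rw [hPdef]; simp [List.append_assoc]
  have hQ1 : Q = (S ++ [SStep.diag, SStep.north]) ++ (R ++ ([SStep.east, SStep.east] ++ T)) := by
    rw [hQdef]; simp [List.append_assoc]
  have hQ2 : Q = S ++ ([SStep.diag, SStep.north] ++ (R ++ ([SStep.east, SStep.east] ++ T))) := by
    rw [hQdef]; simp [List.append_assoc]
  have hQ3 : Q = ((S ++ [SStep.diag, SStep.north]) ++ R) ++ ([SStep.east, SStep.east] ++ T) := by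
    rw [hQdef]; simp [List.append_assoc]
  -- lengths
  have hlen1 : (S ++ [SStep.north, SStep.diag]).length = m + 2 := by simp [hm]
  have hlen1' : (S ++ [SStep.diag, SStep.north]).length = m + 2 := by simp [hm]
  have hlen3 : ((S ++ [SStep.north, SStep.diag]) ++ R).length = m2 := by simp [hm2]; omega
  have hlen3' : ((S ++ [SStep.diag, SStep.north]) ++ R).length = m2 := by simp [hm2]; omega
  have hlenP : P.length = m2 + 2 + T.length := by rw [hPdef]; simp [hm2]; omega
  have hlenQ : Q.length = m2 + 2 + T.length := by rw [hQdef]; simp [hm2]; omega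
  have hmm2 : m + 2 ≤ m2 := by omega
  -- endpoints of the two modified prefixes
  have hend1 : endPt (S ++ [SStep.north, SStep.diag]) = (i+1, j+2) := by
    rw [endPt_append, hS]; simp [endPt, SStep.vec]
  have hend2 : endPt (S ++ [SStep.diag, SStep.north]) = (i+1, j+2) := by
    rw [endPt_append, hS]; simp [endPt, SStep.vec]
  -- positions along P and Q
  have pPm : posAt P m = (i, j) := by
    rw [hP2, posAt_prefix _ hm.le, posAt_of_length_le hm.ge, hS]
  have pQm : posAt Q m = (i, j) := by
    rw [hQ2, posAt_prefix _ hm.le, posAt_of_length_le hm.ge, hS]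
  have pPm1 : posAt P (m+1) = (i, j+1) := by
    rw [hP2, posAt_suffix _ (by omega), hS]
    have h1 : m + 1 - S.length = 1 := by omega
    rw [h1, posAt_prefix _ (by simp)]
    simp [posAt, endPt, SStep.vec]
  have pQm1 : posAt Q (m+1) = (i+1, j+1) := by
    rw [hQ2, posAt_suffix _ (by omega), hS]
    have h1 : m + 1 - S.length = 1 := by omega
    rw [h1, posAt_prefix _ (by simp)]
    simp [posAt, endPt, SStep.vec]
  have pPm2 : posAt P (m+2) = (i+1, j+2) := by
    rw [hP1, posAt_suffix _ (by omega), hend1, hlen1]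
    have h1 : m + 2 - (m + 2) = 0 := by omega
    rw [h1]
    simp [posAt, endPt, SStep.vec]
  have pQm2 : posAt Q (m+2) = (i+1, j+2) := by
    rw [hQ1, posAt_suffix _ (by omega), hend2, hlen1']
    have h1 : m + 2 - (m + 2) = 0 := by omega
    rw [h1]
    simp [posAt, endPt, SStep.vec]
  -- positions agree below m and at/above m+2
  have pPQlow : ∀ l ≤ m, posAt P l = posAt Q l := by
    intro l hl
    rw [hP2, hQ2, posAt_prefix _ (hl.trans hm.le), posAt_prefix _ (hl.trans hm.le)]
  have pPhigh : ∀ l, m + 2 ≤ l → posAt P l = posAt Q l := by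
    intro l hl
    have h1 : (S ++ [SStep.north, SStep.diag]).length ≤ l := by rw [hlen1]; omega
    have h2 : (S ++ [SStep.diag, SStep.north]).length ≤ l := by rw [hlen1']; omega
    rw [hP1, hQ1, posAt_suffix _ h1, posAt_suffix _ h2, hend1, hend2, hlen1, hlen1']
  -- steps
  have stepPm : P[m]? = some SStep.north := by
    rw [hP2, List.getElem?_append_right (by omega)]
    have h1 : m - S.length = 0 := by omega
    rw [h1]; simp
  have stepPm1 : P[m+1]? = some SStep.diag := by
    rw [hP2, List.getElem?_append_right (by omega)]
    have h1 : m + 1 - S.length = 1 := by omega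
    rw [h1]; simp
  have stepQm : Q[m]? = some SStep.diag := by
    rw [hQ2, List.getElem?_append_right (by omega)]
    have h1 : m - S.length = 0 := by omega
    rw [h1]; simp
  have stepQm1 : Q[m+1]? = some SStep.north := by
    rw [hQ2, List.getElem?_append_right (by omega)]
    have h1 : m + 1 - S.length = 1 := by omega
    rw [h1]; simp
  have stepLow : ∀ l < m, P[l]? = Q[l]? := by
    intro l hl
    rw [hP2, hQ2, List.getElem?_append_left (by omega), List.getElem?_append_left (by omega)]
  have stepHigh : ∀ l, m + 2 ≤ l → P[l]? = Q[l]? := by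
    intro l hl
    have e1 : P[l]? = (R ++ ([SStep.east, SStep.east] ++ T))[l - (m+2)]? := by
      rw [hP1, List.getElem?_append_right (by rw [hlen1]; omega), hlen1]
    have e2 : Q[l]? = (R ++ ([SStep.east, SStep.east] ++ T))[l - (m+2)]? := by
      rw [hQ1, List.getElem?_append_right (by rw [hlen1']; omega), hlen1']
    rw [e1, e2]
  -- positions and steps around m2
  have pPm2' : posAt P m2 = (j, k) := by
    rw [hP3, posAt_prefix _ (le_of_eq hlen3.symm), posAt_of_length_le (le_of_eq hlen3), hR]
  have pPm21 : posAt P (m2+1) = (j+1, k) := by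
    rw [hP3, posAt_suffix _ (by omega), hlen3, hR]
    have h1 : m2 + 1 - m2 = 1 := by omega
    rw [h1, posAt_prefix _ (by simp)]
    simp [posAt, endPt, SStep.vec]
  have pPm22 : posAt P (m2+2) = (j+2, k) := by
    rw [hP3, posAt_suffix _ (by omega), hlen3, hR]
    have h1 : m2 + 2 - m2 = 2 := by omega
    rw [h1, posAt_prefix _ (by simp)]
    simp [posAt, endPt, SStep.vec]
  have pQm2' : posAt Q m2 = (j, k) := by rw [← pPhigh m2 (by omega)]; exact pPm2'
  have pQm21 : posAt Q (m2+1) = (j+1, k) := by rw [← pPhigh (m2+1) (by omega)]; exact pPm21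
  have pQm22 : posAt Q (m2+2) = (j+2, k) := by rw [← pPhigh (m2+2) (by omega)]; exact pPm22
  have stepPm2 : P[m2]? = some SStep.east := by
    rw [hP3, List.getElem?_append_right (by omega), hlen3]
    have h1 : m2 - m2 = 0 := by omega
    rw [h1]; simp
  have stepPm21 : P[m2+1]? = some SStep.east := by
    rw [hP3, List.getElem?_append_right (by omega), hlen3]
    have h1 : m2 + 1 - m2 = 1 := by omega
    rw [h1, List.getElem?_append_left (by simp)]; simp
  have stepQm2 : Q[m2]? = some SStep.east := by rw [← stepHigh m2 (by omega)]; exact stepPm2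
  have stepQm21 : Q[m2+1]? = some SStep.east := by
    rw [← stepHigh (m2+1) (by omega)]; exact stepPm21
  -- global bounds
  have hjk : j + 2 ≤ k := by have h := habove (m2+2); rw [pPm22] at h; exact h
  have hkn : k ≤ n := by
    have h1 : (posAt P m2).2 ≤ (posAt P P.length).2 := posAt_snd_le P (by omega)
    rw [pPm2', posAt_of_length_le le_rfl, hend] at h1
    exact h1
  have hjn : j + 2 ≤ n := by omega
  have hin : i < n := by omega
  -- monotone coordinate bounds along P
  have bxle : ∀ l ≤ m2, (posAt P l).1 ≤ j := by
    intro l hl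
    have h := posAt_fst_le P hl
    rw [pPm2'] at h; exact h
  have bxge2 : ∀ l, m2 + 2 ≤ l → j + 2 ≤ (posAt P l).1 := by
    intro l hl
    have h := posAt_fst_le P hl
    rw [pPm22] at h; exact h
  have byle : ∀ l ≤ m, (posAt P l).2 ≤ j := by
    intro l hl
    have h := posAt_snd_le P hl
    rw [pPm] at h; exact h
  have bxle0 : ∀ l ≤ m, (posAt P l).1 ≤ i := by
    intro l hl
    have h := posAt_fst_le P hl
    rw [pPm] at h; exact h
  have byge1 : ∀ l, m + 1 ≤ l → j + 1 ≤ (posAt P l).2 := by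
    intro l hl
    have h := posAt_snd_le P hl
    rw [pPm1] at h; exact h
  have byge2 : ∀ l, m + 2 ≤ l → j + 2 ≤ (posAt P l).2 := by
    intro l hl
    have h := posAt_snd_le P hl
    rw [pPm2] at h; exact h
  have bxge1 : ∀ l, m + 2 ≤ l → i + 1 ≤ (posAt P l).1 := by
    intro l hl
    have h := posAt_fst_le P hl
    rw [pPm2] at h; exact h
  -- monotone coordinate bounds along Q
  have Qbxle : ∀ l ≤ m2, (posAt Q l).1 ≤ j := by
    intro l hl
    have h := posAt_fst_le Q hl
    rw [pQm2'] at h; exact h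
  have Qbxge2 : ∀ l, m2 + 2 ≤ l → j + 2 ≤ (posAt Q l).1 := by
    intro l hl
    have h := posAt_fst_le Q hl
    rw [pQm22] at h; exact h
  have Qbyle : ∀ l ≤ m, (posAt Q l).2 ≤ j := by
    intro l hl
    have h := posAt_snd_le Q hl
    rw [pQm] at h; exact h
  have Qbxle0 : ∀ l ≤ m, (posAt Q l).1 ≤ i := by
    intro l hl
    have h := posAt_fst_le Q hl
    rw [pQm] at h; exact h
  have Qbyge1 : ∀ l, m + 1 ≤ l → j + 1 ≤ (posAt Q l).2 := by
    intro l hl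
    have h := posAt_snd_le Q hl
    rw [pQm1] at h; exact h
  have Qbyge2 : ∀ l, m + 2 ≤ l → j + 2 ≤ (posAt Q l).2 := by
    intro l hl
    have h := posAt_snd_le Q hl
    rw [pQm2] at h; exact h
  have Qbxge1 : ∀ l, m + 2 ≤ l → i + 1 ≤ (posAt Q l).1 := by
    intro l hl
    have h := posAt_fst_le Q hl
    rw [pQm2] at h; exact h
  -- index pinning lemmas
  have hy_m1 : ∀ l, (posAt P l).2 = j + 1 → l = m + 1 := by
    intro l h
    rcases Nat.lt_or_ge l (m+1) with hc | hc
    · have := byle l (by omega); omega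
    · rcases Nat.lt_or_ge l (m+2) with hc2 | hc2
      · omega
      · have := byge2 l hc2; omega
  have hyQ_m1 : ∀ l, (posAt Q l).2 = j + 1 → l = m + 1 := by
    intro l h
    rcases Nat.lt_or_ge l (m+1) with hc | hc
    · have := Qbyle l (by omega); omega
    · rcases Nat.lt_or_ge l (m+2) with hc2 | hc2
      · omega
      · have := Qbyge2 l hc2; omega
  have hx_m21 : ∀ l, (posAt P l).1 = j + 1 → l = m2 + 1 := by
    intro l h
    rcases Nat.lt_or_ge l (m2+1) with hc | hc
    · have := bxle l (by omega); omega
    · rcases Nat.lt_or_ge l (m2+2) with hc2 | hc2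
      · omega
      · have := bxge2 l hc2; omega
  have hxQ_m21 : ∀ l, (posAt Q l).1 = j + 1 → l = m2 + 1 := by
    intro l h
    rcases Nat.lt_or_ge l (m2+1) with hc | hc
    · have := Qbxle l (by omega); omega
    · rcases Nat.lt_or_ge l (m2+2) with hc2 | hc2
      · omega
      · have := Qbxge2 l hc2; omega
  have uniqP_ij : ∀ l, posAt P l = (i, j) → l = m := by
    intro l h
    have hle : l ≤ P.length := index_le_length (by rw [h, hend]; simp; omega)
    exact index_unique hle (by omega) (by rw [h, pPm])
  have uniqQ_ij : ∀ l, posAt Q l = (i, j) → l = m := by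
    intro l h
    have hendQ : endPt Q = (n, n) := by
      have h1 : posAt Q Q.length = posAt P Q.length := (pPhigh Q.length (by omega)).symm
      rw [posAt_of_length_le le_rfl, posAt_of_length_le (by omega)] at h1
      rw [h1, hend]
    have hle : l ≤ Q.length := index_le_length (by rw [h, hendQ]; simp; omega)
    exact index_unique hle (by omega) (by rw [h, pQm])
  -- step successor positions
  have succP : ∀ l, P[l]? = some SStep.diag →
      posAt P (l+1) = ((posAt P l).1 + 1, (posAt P l).2 + 1) := by
    intro l hd
    rw [posAt_succ, hd]; rfl
  have succQ : ∀ l, Q[l]? = some SStep.diag →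
      posAt Q (l+1) = ((posAt Q l).1 + 1, (posAt Q l).2 + 1) := by
    intro l hd
    rw [posAt_succ, hd]; rfl
  -- diagonal-step characterizations
  have D3 : ∃ l, P[l]? = some SStep.diag ∧ posAt P l = (i, j+1) := ⟨m+1, stepPm1, pPm1⟩
  have D4 : ∃ l, Q[l]? = some SStep.diag ∧ posAt Q l = (i, j) := ⟨m, stepQm, pQm⟩
  have D2 : ¬ ∃ l, P[l]? = some SStep.diag ∧ posAt P l = (i, j) := by
    rintro ⟨l, hd, hpos⟩
    rw [uniqP_ij l hpos, stepPm] at hd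
    simp at hd
  have D5 : ¬ ∃ l, Q[l]? = some SStep.diag ∧ posAt Q l = (i, j+1) := by
    rintro ⟨l, hd, hpos⟩
    have hl : l = m + 1 := hyQ_m1 l (by rw [hpos])
    rw [hl, stepQm1] at hd
    simp at hd
  have D1 : ∀ u v : ℕ, ¬(u = i ∧ v = j+1) → ¬(u = i ∧ v = j) →
      ((∃ l, P[l]? = some SStep.diag ∧ posAt P l = (u, v)) ↔
        (∃ l, Q[l]? = some SStep.diag ∧ posAt Q l = (u, v))) := by
    intro u v h1 h2
    constructor
    · rintro ⟨l, hd, hpos⟩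
      rcases Nat.lt_or_ge l m with hc | hc
      · exact ⟨l, by rw [← stepLow l hc]; exact hd, by rw [← pPQlow l hc.le]; exact hpos⟩
      · rcases Nat.lt_or_ge l (m+2) with hc2 | hc2
        · have : l = m ∨ l = m + 1 := by omega
          rcases this with h | h
          · rw [h, stepPm] at hd; simp at hd
          · rw [h, pPm1] at hpos
            simp only [Prod.mk.injEq] at hpos
            exact absurd ⟨hpos.1.symm, hpos.2.symm⟩ h1
        · exact ⟨l, by rw [← stepHigh l hc2]; exact hd, by rw [← pPhigh l hc2]; exact hpos⟩
    · rintro ⟨l, hd, hpos⟩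
      rcases Nat.lt_or_ge l m with hc | hc
      · exact ⟨l, by rw [stepLow l hc]; exact hd, by rw [pPQlow l hc.le]; exact hpos⟩
      · rcases Nat.lt_or_ge l (m+2) with hc2 | hc2
        · have : l = m ∨ l = m + 1 := by omega
          rcases this with h | h
          · rw [h, pQm] at hpos
            simp only [Prod.mk.injEq] at hpos
            exact absurd ⟨hpos.1.symm, hpos.2.symm⟩ h2
          · rw [h, stepQm1] at hd; simp at hd
        · exact ⟨l, by rw [stepHigh l hc2]; exact hd, by rw [pPhigh l hc2]; exact hpos⟩
  have D6 : ∀ u : ℕ, (∃ l, Q[l]? = some SStep.diag ∧ posAt Q l = (u, j)) → u = i := by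
    rintro u ⟨l, hd, hpos⟩
    have h2 : (posAt Q (l+1)).2 = j + 1 := by rw [succQ l hd, hpos]
    have hl : l + 1 = m + 1 := hyQ_m1 _ h2
    have hl' : l = m := by omega
    rw [hl', pQm] at hpos
    simp only [Prod.mk.injEq] at hpos
    exact hpos.1.symm
  have D7 : ∀ u : ℕ, ¬ (∃ l, P[l]? = some SStep.diag ∧ posAt P l = (u, j)) := by
    rintro u ⟨l, hd, hpos⟩
    have h2 : (posAt P (l+1)).2 = j + 1 := by rw [succP l hd, hpos]
    have hl : l + 1 = m + 1 := hy_m1 _ h2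
    have hl' : l = m := by omega
    rw [hl', stepPm] at hd
    simp at hd
  have D8 : ∀ u : ℕ, (∃ l, P[l]? = some SStep.diag ∧ posAt P l = (u, j+1)) → u = i := by
    rintro u ⟨l, hd, hpos⟩
    have hl : l = m + 1 := hy_m1 l (by rw [hpos])
    rw [hl, pPm1] at hpos
    simp only [Prod.mk.injEq] at hpos
    exact hpos.1.symm
  have D9 : ∀ u : ℕ, ¬ (∃ l, Q[l]? = some SStep.diag ∧ posAt Q l = (u, j+1)) := by
    rintro u ⟨l, hd, hpos⟩
    have hl : l = m + 1 := hyQ_m1 l (by rw [hpos])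
    rw [hl, stepQm1] at hd
    simp at hd
  have D10P : ∀ v : ℕ, ¬ (∃ l, P[l]? = some SStep.diag ∧ posAt P l = (j, v)) := by
    rintro v ⟨l, hd, hpos⟩
    have h2 : (posAt P (l+1)).1 = j + 1 := by rw [succP l hd, hpos]
    have hl : l + 1 = m2 + 1 := hx_m21 _ h2
    have hl' : l = m2 := by omega
    rw [hl', stepPm2] at hd
    simp at hd
  have D10Q : ∀ v : ℕ, ¬ (∃ l, Q[l]? = some SStep.diag ∧ posAt Q l = (j, v)) := by
    rintro v ⟨l, hd, hpos⟩
    have h2 : (posAt Q (l+1)).1 = j + 1 := by rw [succQ l hd, hpos]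
    have hl : l + 1 = m2 + 1 := hxQ_m21 _ h2
    have hl' : l = m2 := by omega
    rw [hl', stepQm2] at hd
    simp at hd
  have D11P : ∀ v : ℕ, ¬ (∃ l, P[l]? = some SStep.diag ∧ posAt P l = (j+1, v)) := by
    rintro v ⟨l, hd, hpos⟩
    have hl : l = m2 + 1 := hx_m21 l (by rw [hpos])
    rw [hl, stepPm21] at hd
    simp at hd
  have D11Q : ∀ v : ℕ, ¬ (∃ l, Q[l]? = some SStep.diag ∧ posAt Q l = (j+1, v)) := by
    rintro v ⟨l, hd, hpos⟩
    have hl : l = m2 + 1 := hxQ_m21 l (by rw [hpos])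
    rw [hl, stepQm21] at hd
    simp at hd
  -- boxBelow characterizations
  have B2 : ∃ l, (posAt P l).1 ≤ i ∧ j + 1 ≤ (posAt P l).2 := ⟨m+1, by rw [pPm1]; omega⟩
  have B3 : ¬ ∃ l, (posAt Q l).1 ≤ i ∧ j + 1 ≤ (posAt Q l).2 := by
    rintro ⟨l, h1, h2⟩
    rcases Nat.lt_or_ge l (m+1) with hc | hc
    · have := Qbyle l (by omega); omega
    · rcases Nat.lt_or_ge l (m+2) with hc2 | hc2
      · have hl : l = m + 1 := by omega
        rw [hl, pQm1] at h1
        simp at h1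
      · have := Qbxge1 l hc2; omega
  have B4 : ¬ ∃ l, (posAt Q l).1 ≤ i ∧ j + 2 ≤ (posAt Q l).2 := by
    rintro ⟨l, h1, h2⟩
    rcases Nat.lt_or_ge l (m+1) with hc | hc
    · have := Qbyle l (by omega); omega
    · rcases Nat.lt_or_ge l (m+2) with hc2 | hc2
      · have hl : l = m + 1 := by omega
        rw [hl, pQm1] at h2
        simp at h2
      · have := Qbxge1 l hc2; omega
  have B1 : ∀ u v : ℕ, ¬(u = i ∧ v = j) →
      ((∃ l, (posAt P l).1 ≤ u ∧ v + 1 ≤ (posAt P l).2) ↔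
        (∃ l, (posAt Q l).1 ≤ u ∧ v + 1 ≤ (posAt Q l).2)) := by
    intro u v huv
    constructor
    · rintro ⟨l, h1, h2⟩
      by_cases hl : l = m + 1
      · rw [hl, pPm1] at h1 h2
        simp only at h1 h2
        rcases Nat.lt_or_ge v j with hv | hv
        · exact ⟨m, by rw [pQm]; simp; omega⟩
        · have hv' : v = j := by omega
          have hu : u ≠ i := fun h => huv ⟨h, hv'⟩
          exact ⟨m+2, by rw [pQm2]; simp; omega⟩
      · have hpos : posAt P l = posAt Q l := by
          rcases Nat.lt_or_ge l (m+1) with hc | hc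
          · exact pPQlow l (by omega)
          · exact pPhigh l (by omega)
        exact ⟨l, by rw [← hpos]; exact h1, by rw [← hpos]; exact h2⟩
    · rintro ⟨l, h1, h2⟩
      by_cases hl : l = m + 1
      · rw [hl, pQm1] at h1 h2
        simp only at h1 h2
        exact ⟨m+2, by rw [pPm2]; simp; omega⟩
      · have hpos : posAt P l = posAt Q l := by
          rcases Nat.lt_or_ge l (m+1) with hc | hc
          · exact pPQlow l (by omega)
          · exact pPhigh l (by omega)
        exact ⟨l, by rw [hpos]; exact h1, by rw [hpos]; exact h2⟩
  have B5 : ∀ u : ℕ, (∃ l, (posAt Q l).1 ≤ u ∧ j + 1 ≤ (posAt Q l).2) ↔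
      (∃ l, (posAt Q l).1 ≤ u ∧ j + 2 ≤ (posAt Q l).2) := by
    intro u
    constructor
    · rintro ⟨l, h1, h2⟩
      rcases Nat.lt_or_ge l (m+1) with hc | hc
      · have := Qbyle l (by omega); omega
      · rcases Nat.lt_or_ge l (m+2) with hc2 | hc2
        · have hl : l = m + 1 := by omega
          rw [hl, pQm1] at h1
          simp only at h1
          exact ⟨m+2, by rw [pQm2]; simp; omega⟩
        · exact ⟨l, h1, Qbyge2 l hc2⟩
    · rintro ⟨l, h1, h2⟩
      exact ⟨l, h1, by omega⟩
  have B6 : ∀ v : ℕ, (∃ l, (posAt Q l).1 ≤ j ∧ v + 1 ≤ (posAt Q l).2) ↔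
      (∃ l, (posAt Q l).1 ≤ j + 1 ∧ v + 1 ≤ (posAt Q l).2) := by
    intro v
    constructor
    · rintro ⟨l, h1, h2⟩
      exact ⟨l, by omega, h2⟩
    · rintro ⟨l, h1, h2⟩
      rcases Nat.lt_or_ge (posAt Q l).1 (j+1) with hc | hc
      · exact ⟨l, by omega, h2⟩
      · have hx : (posAt Q l).1 = j + 1 := by omega
        have hl := hxQ_m21 l hx
        rw [hl, pQm21] at h2
        simp only at h2
        exact ⟨m2, by rw [pQm2']; simp; omega⟩
  -- Q is a Schröder path
  have hendQ : endPt Q = (n, n) := by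
    have h1 : posAt Q Q.length = posAt P Q.length := (pPhigh Q.length (by omega)).symm
    rw [posAt_of_length_le le_rfl, posAt_of_length_le (by omega)] at h1
    rw [h1, hend]
  have hSchQ : IsSchroder n Q := by
    refine ⟨hendQ, ?_, ?_⟩
    · intro l
      by_cases hl : l = m + 1
      · rw [hl, pQm1]; simp; omega
      · have hpos : posAt Q l = posAt P l := by
          rcases Nat.lt_or_ge l (m+1) with hc | hc
          · exact (pPQlow l (by omega)).symm
          · exact (pPhigh l (by omega)).symm
        rw [hpos]; exact habove l
    · intro l hd
      by_cases hl : l = m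
      · rw [hl, pQm]; simp; omega
      · by_cases hl1 : l = m + 1
        · rw [hl1, stepQm1] at hd; simp at hd
        · have hstep : Q[l]? = P[l]? := by
            rcases Nat.lt_or_ge l m with hc | hc
            · exact (stepLow l hc).symm
            · exact (stepHigh l (by omega)).symm
          have hpos : posAt Q l = posAt P l := by
            rcases Nat.lt_or_ge l (m+1) with hc | hc
            · exact (pPQlow l (by omega)).symm
            · exact (pPhigh l (by omega)).symm
          rw [hpos]
          exact hdiagP l (by rw [← hstep]; exact hd)
  refine ⟨hSchQ, ?_⟩
  intro N
  -- the three distinguished vertices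
  have hnn : j + 1 < n := by omega
  set av : Fin n := ⟨i, by omega⟩ with hav
  set bv : Fin n := ⟨j, by omega⟩ with hbv
  set cv : Fin n := ⟨j+1, hnn⟩ with hcv
  -- membership descriptions of the path graphs
  have memE1P : ∀ p : Fin n × Fin n, p ∈ (pathGraph n P).E1 ↔
      (∃ l, P[l]? = some SStep.diag ∧ posAt P l = ((p.1:ℕ), (p.2:ℕ))) := by
    intro p
    simp only [pathGraph, Finset.mem_filter, Finset.mem_univ, true_and, hasDiagStep,
      Nat.add_sub_cancel]
  have memE1Q : ∀ p : Fin n × Fin n, p ∈ (pathGraph n Q).E1 ↔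
      (∃ l, Q[l]? = some SStep.diag ∧ posAt Q l = ((p.1:ℕ), (p.2:ℕ))) := by
    intro p
    simp only [pathGraph, Finset.mem_filter, Finset.mem_univ, true_and, hasDiagStep,
      Nat.add_sub_cancel]
  have memEdP : ∀ p : Fin n × Fin n, p ∈ (pathGraph n P).Ed ↔
      ((p.1:ℕ) < (p.2:ℕ) ∧ (∃ l, (posAt P l).1 ≤ (p.1:ℕ) ∧ (p.2:ℕ) + 1 ≤ (posAt P l).2) ∧
        ¬ (∃ l, P[l]? = some SStep.diag ∧ posAt P l = ((p.1:ℕ), (p.2:ℕ)))) := by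
    intro p
    simp only [pathGraph, Finset.mem_filter, Finset.mem_univ, true_and, hasDiagStep,
      boxBelow, Nat.add_sub_cancel]
  have memEdQ : ∀ p : Fin n × Fin n, p ∈ (pathGraph n Q).Ed ↔
      ((p.1:ℕ) < (p.2:ℕ) ∧ (∃ l, (posAt Q l).1 ≤ (p.1:ℕ) ∧ (p.2:ℕ) + 1 ≤ (posAt Q l).2) ∧
        ¬ (∃ l, Q[l]? = some SStep.diag ∧ posAt Q l = ((p.1:ℕ), (p.2:ℕ)))) := by
    intro p
    simp only [pathGraph, Finset.mem_filter, Finset.mem_univ, true_and, hasDiagStep,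
      boxBelow, Nat.add_sub_cancel]
  -- two key memberships
  have hmem_ab_E1Q : (av, bv) ∈ (pathGraph n Q).E1 := by
    rw [memE1Q]; exact D4
  have hmem_bc_EdQ : (bv, cv) ∈ (pathGraph n Q).Ed := by
    rw [memEdQ]
    refine ⟨show (j:ℕ) < j + 1 by omega, ⟨m2, ?_, ?_⟩, D10Q (j+1)⟩
    · rw [pQm2']
    · rw [pQm2']; exact (show (j:ℕ) + 1 + 1 ≤ k by omega)
  -- identification of the two graphs
  set A1 : Finset (Fin n × Fin n) := (pathGraph n Q).E1.erase (av, bv) with hA1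
  set A2 : Finset (Fin n × Fin n) := (pathGraph n Q).Ed.erase (bv, cv) with hA2
  have hE1P : (pathGraph n P).E1 = insert (av, cv) A1 := by
    rw [hA1]
    ext p
    rw [Finset.mem_insert, memE1P, Finset.mem_erase, memE1Q]
    constructor
    · intro h
      by_cases hc1 : (p.1:ℕ) = i ∧ (p.2:ℕ) = j + 1
      · left
        have e1 : p.1 = av := Fin.ext hc1.1
        have e2 : p.2 = cv := Fin.ext hc1.2
        rw [← e1, ← e2]
      · by_cases hc2 : (p.1:ℕ) = i ∧ (p.2:ℕ) = j
        · rw [hc2.1, hc2.2] at h; exact absurd h D2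
        · right
          refine ⟨fun hpe => hc2 ⟨by rw [hpe], by rw [hpe]⟩, (D1 _ _ hc1 hc2).mp h⟩
    · rintro (h | ⟨hne, h⟩)
      · rw [h]; exact D3
      · by_cases hc2 : (p.1:ℕ) = i ∧ (p.2:ℕ) = j
        · exact absurd (show p = (av, bv) by
            have e1 : p.1 = av := Fin.ext hc2.1
            have e2 : p.2 = bv := Fin.ext hc2.2
            rw [← e1, ← e2]) hne
        · by_cases hc1 : (p.1:ℕ) = i ∧ (p.2:ℕ) = j + 1
          · rw [hc1.1, hc1.2] at h; exact absurd h D5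
          · exact (D1 _ _ hc1 hc2).mpr h
  have hEdP : (pathGraph n P).Ed = insert (av, bv) (pathGraph n Q).Ed := by
    ext p
    rw [Finset.mem_insert, memEdP, memEdQ]
    constructor
    · rintro ⟨hlt, hbb, hnd⟩
      by_cases hc2 : (p.1:ℕ) = i ∧ (p.2:ℕ) = j
      · left
        have e1 : p.1 = av := Fin.ext hc2.1
        have e2 : p.2 = bv := Fin.ext hc2.2
        rw [← e1, ← e2]
      · right
        by_cases hc1 : (p.1:ℕ) = i ∧ (p.2:ℕ) = j + 1
        · exfalso; apply hnd; rw [hc1.1, hc1.2]; exact D3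
        · exact ⟨hlt, (B1 _ _ hc2).mp hbb, fun hd => hnd ((D1 _ _ hc1 hc2).mpr hd)⟩
    · rintro (h | ⟨hlt, hbb, hnd⟩)
      · rw [h]; exact ⟨hij, B2, D2⟩
      · by_cases hc2 : (p.1:ℕ) = i ∧ (p.2:ℕ) = j
        · exfalso; rw [hc2.1, hc2.2] at hbb; exact B3 hbb
        · by_cases hc1 : (p.1:ℕ) = i ∧ (p.2:ℕ) = j + 1
          · exfalso; rw [hc1.1, hc1.2] at hbb; exact B4 hbb
          · exact ⟨hlt, (B1 _ _ hc2).mpr hbb, fun hd => hnd ((D1 _ _ hc1 hc2).mp hd)⟩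
  -- assemble the two graphs in the shape required by llt_key
  have hIE2 : insert (bv, cv) A2 = (pathGraph n Q).Ed := by
    rw [hA2]; exact Finset.insert_erase hmem_bc_EdQ
  have hIE1 : insert (av, bv) A1 = (pathGraph n Q).E1 := by
    rw [hA1]; exact Finset.insert_erase hmem_ab_E1Q
  have hgP : pathGraph n P = ⟨insert (av, cv) A1, ∅, insert (av, bv) (insert (bv, cv) A2)⟩ := by
    have h0 : pathGraph n P = ⟨(pathGraph n P).E1, ∅, (pathGraph n P).Ed⟩ := rfl
    rw [h0, hE1P, hEdP, hIE2]
  have hgQ : pathGraph n Q = ⟨insert (av, bv) A1, ∅, insert (bv, cv) A2⟩ := by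
    have h0 : pathGraph n Q = ⟨(pathGraph n Q).E1, ∅, (pathGraph n Q).Ed⟩ := rfl
    rw [h0, ← hIE1, ← hIE2]
  rw [hgP, hgQ]
  apply SchroderAux.llt_key N av bv cv
    (Fin.ne_of_val_ne (show i ≠ j by omega))
    (Fin.ne_of_val_ne (show i ≠ j + 1 by omega))
    (Fin.ne_of_val_ne (show j ≠ j + 1 by omega))
  -- (a,b) ∉ E1'
  · rw [hA1]; exact Finset.notMem_erase _ _
  -- (a,c) ∉ E1'
  · rw [hA1]
    intro hmem
    have h := (memE1Q _).mp (Finset.mem_of_mem_erase hmem)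
    exact D5 h
  -- (a,b) ∉ Ed'
  · rw [hA2]
    intro hmem
    have h := (memEdQ _).mp (Finset.mem_of_mem_erase hmem)
    exact h.2.2 D4
  -- (a,c) ∉ Ed'
  · rw [hA2]
    intro hmem
    have h := (memEdQ _).mp (Finset.mem_of_mem_erase hmem)
    exact B4 h.2.1
  -- (b,c) ∉ Ed'
  · rw [hA2]; exact Finset.notMem_erase _ _
  -- symmetry of E1'
  · intro p hp
    rw [hA1] at hp ⊢
    have hne := (Finset.mem_erase.mp hp).1
    have hd := (memE1Q p).mp (Finset.mem_of_mem_erase hp)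
    have h1b : p.1 ≠ bv := by
      intro h
      rw [show (p.1:ℕ) = j from congrArg Fin.val h] at hd
      exact D10Q _ hd
    have h1c : p.1 ≠ cv := by
      intro h
      rw [show (p.1:ℕ) = j + 1 from congrArg Fin.val h] at hd
      exact D11Q _ hd
    have h2c : p.2 ≠ cv := by
      intro h
      rw [show (p.2:ℕ) = j + 1 from congrArg Fin.val h] at hd
      exact D9 _ hd
    have h2b : p.2 ≠ bv := by
      intro h
      rw [show (p.2:ℕ) = j from congrArg Fin.val h] at hd
      have hi1 := D6 _ hd
      apply hne
      have e1 : p.1 = av := Fin.ext hi1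
      rw [← e1, ← h]
    rw [Equiv.swap_apply_of_ne_of_ne h1b h1c, Equiv.swap_apply_of_ne_of_ne h2b h2c]
    exact hp
  -- symmetry of Ed'
  · intro p hp
    rw [hA2] at hp ⊢
    have hne := (Finset.mem_erase.mp hp).1
    obtain ⟨hlt, hbb, hnd⟩ := (memEdQ p).mp (Finset.mem_of_mem_erase hp)
    by_cases h2b : p.2 = bv
    · have hj2 : (p.2:ℕ) = j := congrArg Fin.val h2b
      have h1b : p.1 ≠ bv := by
        intro h; have h' := congrArg Fin.val h; simp only [hbv] at h'; omega
      have h1c : p.1 ≠ cv := by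
        intro h; have h' := congrArg Fin.val h; simp only [hcv] at h'; omega
      rw [Equiv.swap_apply_of_ne_of_ne h1b h1c, h2b, Equiv.swap_apply_left]
      refine Finset.mem_erase.mpr ⟨fun h => h1b (congrArg Prod.fst h), (memEdQ _).mpr ?_⟩
      refine ⟨show (p.1:ℕ) < j + 1 by omega, ?_, D9 _⟩
      rw [hj2] at hbb
      exact (B5 (p.1:ℕ)).mp hbb
    · by_cases h2c : p.2 = cv
      · have hj2 : (p.2:ℕ) = j + 1 := congrArg Fin.val h2c
        have h1b : p.1 ≠ bv := by
          intro h
          apply hne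
          rw [← h, ← h2c]
        have h1c : p.1 ≠ cv := by
          intro h; have h' := congrArg Fin.val h; simp only [hcv] at h'; omega
        have h1a : (p.1:ℕ) ≠ i := by
          intro h
          rw [hj2] at hbb
          rw [h] at hbb
          exact B4 hbb
        have h1j : (p.1:ℕ) ≠ j := fun hh => h1b (Fin.ext hh)
        rw [Equiv.swap_apply_of_ne_of_ne h1b h1c, h2c, Equiv.swap_apply_right]
        refine Finset.mem_erase.mpr
          ⟨fun h => (Fin.ne_of_val_ne (show j ≠ j + 1 by omega)) (congrArg Prod.snd h),
            (memEdQ _).mpr ?_⟩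
        refine ⟨show (p.1:ℕ) < j by omega, ?_, fun hd => h1a (D6 _ hd)⟩
        rw [hj2] at hbb
        exact (B5 (p.1:ℕ)).mpr hbb
      · by_cases h1b : p.1 = bv
        · have hj1 : (p.1:ℕ) = j := congrArg Fin.val h1b
          have h2j1 : (p.2:ℕ) ≠ j + 1 := fun hh => h2c (Fin.ext hh)
          rw [h1b, Equiv.swap_apply_left, Equiv.swap_apply_of_ne_of_ne h2b h2c]
          refine Finset.mem_erase.mpr
            ⟨fun h => (Fin.ne_of_val_ne (show j + 1 ≠ j by omega)) (congrArg Prod.fst h),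
              (memEdQ _).mpr ?_⟩
          refine ⟨show (j:ℕ) + 1 < (p.2:ℕ) by omega, ?_, D11Q _⟩
          rw [hj1] at hbb
          exact (B6 (p.2:ℕ)).mp hbb
        · by_cases h1c : p.1 = cv
          · have hj1 : (p.1:ℕ) = j + 1 := congrArg Fin.val h1c
            rw [h1c, Equiv.swap_apply_right, Equiv.swap_apply_of_ne_of_ne h2b h2c]
            refine Finset.mem_erase.mpr
              ⟨fun h => h2c (congrArg Prod.snd h), (memEdQ _).mpr ?_⟩
            refine ⟨show (j:ℕ) < (p.2:ℕ) by omega, ?_, D10Q _⟩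
            rw [hj1] at hbb
            exact (B6 (p.2:ℕ)).mpr hbb
          · rw [Equiv.swap_apply_of_ne_of_ne h1b h1c,
              Equiv.swap_apply_of_ne_of_ne h2b h2c]
            exact hp
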